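/- Let T_bold := P_{M_m^m} ⋯ P_{M_1^m} in the product Hilbert space H^m, P_D the projection onto the diagonal and P_{C^⊥} the projection onto (M_1 × ... × M_m)^⊥. Then for every k ≥ 1, ‖P_{C^⊥} T_bold^k P_D‖ ≤ √((m/2)·‖(T_bold^k − T_bold^{k−1}) P_D‖). -/

import Mathlib

noncomputable section
open Filter
open RealInnerProductSpace

variable {H : Type} [NormedAddCommGroup H] [InnerProductSpace ℝ H] [CompleteSpace H]

/-- The orthogonal projection onto a subspace `K`, viewed as an operator `H →L[ℝ] H`. -/
def projL (K : Submodule ℝ H) [K.HasOrthogonalProjection] : H →L[ℝ] H :=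
  K.subtypeL.comp (K.orthogonalProjectionOnto)

instance piLpCompleteSpace (m : ℕ) : CompleteSpace (PiLp 2 fun _ : Fin m => H) :=
  inferInstance

/-- `M₁ × ⋯ × Mₘ` as a submodule of the product Hilbert space `H^m = PiLp 2 (fun _ : Fin m => H)`.
(The paper equips `H^m` with the inner product `(1/m)∑⟨xᵢ,yᵢ⟩`; this is a positive scalar
multiple of the `PiLp 2` inner product, hence it induces the very same orthogonal projections,
orthogonal complements, and operator norms of maps `H^m → H^m`.) -/
def prodSubmodule {m : ℕ} (M : Fin m → Submodule ℝ H) :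
    Submodule ℝ (PiLp 2 fun _ : Fin m => H) :=
  Submodule.comap (WithLp.linearEquiv 2 ℝ (∀ _ : Fin m, H)).toLinearMap
    (Submodule.pi Set.univ M)

instance prodSubmoduleComplete {m : ℕ} (M : Fin m → Submodule ℝ H)
    [∀ i, CompleteSpace (M i)] : CompleteSpace (prodSubmodule M) := by
  have hcl : ∀ i, IsClosed ((M i : Set H)) := fun i =>
    (completeSpace_coe_iff_isComplete.mp inferInstance).isClosed
  have h : IsClosed ((prodSubmodule M : Set (PiLp 2 fun _ : Fin m => H))) := by
    have he : (prodSubmodule M : Set (PiLp 2 fun _ : Fin m => H)) =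
        ⋂ i, (fun x : PiLp 2 (fun _ : Fin m => H) =>
          (WithLp.equiv 2 (∀ _ : Fin m, H)) x i) ⁻¹' (M i : Set H) := by
      ext x
      simp [prodSubmodule, Submodule.mem_pi, Set.mem_iInter]
    rw [he]
    exact isClosed_iInter fun i =>
      (hcl i).preimage ((continuous_apply i).comp (PiLp.continuous_ofLp 2 _))
  exact h.completeSpace_coe

/-- The diagonal `{(x,…,x) : x ∈ H}` as a submodule of the product Hilbert space `H^m`. -/
def diagSubmodule (H : Type) [NormedAddCommGroup H] [InnerProductSpace ℝ H] (m : ℕ) :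
    Submodule ℝ (PiLp 2 fun _ : Fin m => H) :=
  LinearMap.range
    (((WithLp.linearEquiv 2 ℝ (∀ _ : Fin m, H)).symm.toLinearMap).comp
      (LinearMap.pi fun _ : Fin m => LinearMap.id))

instance diagSubmoduleComplete (m : ℕ) : CompleteSpace (diagSubmodule H m) := by
  have h : IsClosed ((diagSubmodule H m : Set (PiLp 2 fun _ : Fin m => H))) := by
    have he : (diagSubmodule H m : Set (PiLp 2 fun _ : Fin m => H)) =
        ⋂ (i : Fin m) (j : Fin m),
          {x : PiLp 2 (fun _ : Fin m => H) |
            (WithLp.equiv 2 (∀ _ : Fin m, H)) x i = (WithLp.equiv 2 (∀ _ : Fin m, H)) x j} := by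
      ext x
      simp only [Set.mem_iInter, Set.mem_setOf_eq, SetLike.mem_coe, diagSubmodule,
        LinearMap.mem_range, LinearMap.coe_comp, Function.comp_apply]
      constructor
      · rintro ⟨y, rfl⟩ i j
        rfl
      · intro h
        rcases Nat.eq_zero_or_pos m with hm | hm
        · subst hm
          refine ⟨0, ?_⟩
          apply (WithLp.equiv 2 (∀ _ : Fin 0, H)).injective
          funext j
          exact j.elim0
        · refine ⟨(WithLp.equiv 2 (∀ _ : Fin m, H)) x ⟨0, hm⟩, ?_⟩
          apply (WithLp.equiv 2 (∀ _ : Fin m, H)).injective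
          funext j
          exact h ⟨0, hm⟩ j
    rw [he]
    exact isClosed_iInter fun i => isClosed_iInter fun j =>
      isClosed_eq ((continuous_apply i).comp (PiLp.continuous_ofLp 2 _))
        ((continuous_apply j).comp (PiLp.continuous_ofLp 2 _))
  exact h.completeSpace_coe

/-- The product `P_{m-1} ∘ ⋯ ∘ P_0` of the operators `P i` (so `P 0` acts first);
for `P i = projL (M i)` this is the cyclic-projections operator `T = P_{M_m} ⋯ P_{M_1}`. -/
def cyclicProd {E : Type} [NormedAddCommGroup E] [NormedSpace ℝ E] {m : ℕ}
    (P : Fin m → (E →L[ℝ] E)) : E →L[ℝ] E :=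
  (List.ofFn P).foldl (fun acc p => p.comp acc) (ContinuousLinearMap.id ℝ E)

variable {K : Submodule ℝ H} [K.HasOrthogonalProjection]

lemma projL_mem (x : H) : projL K x ∈ K := (K.orthogonalProjectionOnto x).2

lemma projL_eq_of {x v : H} (hv : v ∈ K) (h : ∀ w ∈ K, ⟪x - v, w⟫ = 0) : projL K x = v :=
  Submodule.eq_starProjection_of_mem_of_inner_eq_zero hv h

lemma projL_inner_sub (x : H) : ∀ w ∈ K, ⟪x - projL K x, w⟫ = 0 :=
  fun w hw => Submodule.starProjection_inner_eq_zero x w hw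

lemma projL_pythagoras (x : H) :
    ‖projL K x‖ ^ 2 + ‖x - projL K x‖ ^ 2 = ‖x‖ ^ 2 := by
  have h0 : ⟪projL K x, x - projL K x⟫ = 0 := by
    rw [real_inner_comm]
    exact projL_inner_sub x _ (projL_mem x)
  have he : projL K x + (x - projL K x) = x := by abel
  calc ‖projL K x‖ ^ 2 + ‖x - projL K x‖ ^ 2
      = ‖projL K x + (x - projL K x)‖ ^ 2 := by
        rw [norm_add_sq_real, h0]; ring
    _ = ‖x‖ ^ 2 := by rw [he]

lemma real_le_of_sq_le_sq {a b : ℝ} (ha : 0 ≤ a) (hb : 0 ≤ b) (h : a ^ 2 ≤ b ^ 2) : a ≤ b := by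
  nlinarith

lemma norm_projL_apply_le (x : H) : ‖projL K x‖ ≤ ‖x‖ := by
  refine real_le_of_sq_le_sq (norm_nonneg _) (norm_nonneg _) ?_
  nlinarith [projL_pythagoras (K := K) x, sq_nonneg ‖x - projL K x‖]

lemma norm_projL_le : ‖projL K (H := H)‖ ≤ 1 :=
  ContinuousLinearMap.opNorm_le_bound _ zero_le_one fun x => by
    simpa using norm_projL_apply_le (K := K) x

lemma norm_sub_projL_le {x c : H} (hc : c ∈ K) : ‖x - projL K x‖ ≤ ‖x - c‖ := by
  refine real_le_of_sq_le_sq (norm_nonneg _) (norm_nonneg _) ?_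
  have h0 : ⟪x - projL K x, projL K x - c⟫ = 0 :=
    projL_inner_sub x _ (Submodule.sub_mem K (projL_mem x) hc)
  have he : (x - projL K x) + (projL K x - c) = x - c := by abel
  have := norm_add_sq_real (x - projL K x) (projL K x - c)
  rw [he, h0] at this
  nlinarith [sq_nonneg ‖projL K x - c‖]

lemma projL_orthogonal (x : H) : projL Kᗮ x = x - projL K x :=
  Submodule.starProjection_orthogonal_val x


variable {m : ℕ}

lemma mem_prodSubmodule {M : Fin m → Submodule ℝ H} {x : PiLp 2 fun _ : Fin m => H} :
    x ∈ prodSubmodule M ↔ ∀ i, x i ∈ M i := by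
  simp [prodSubmodule, Submodule.mem_pi]

lemma mem_diagSubmodule {x : PiLp 2 fun _ : Fin m => H} :
    x ∈ diagSubmodule H m ↔ ∃ v : H, ∀ i, x i = v := by
  simp only [diagSubmodule, LinearMap.mem_range, LinearMap.coe_comp, Function.comp_apply]
  constructor
  · rintro ⟨v, rfl⟩
    exact ⟨v, fun i => rfl⟩
  · rintro ⟨v, hv⟩
    refine ⟨v, ?_⟩
    apply (WithLp.equiv 2 (∀ _ : Fin m, H)).injective
    funext i
    exact (hv i).symm

def dg (m : ℕ) (v : H) : PiLp 2 fun _ : Fin m => H :=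
  (WithLp.equiv 2 (∀ _ : Fin m, H)).symm (fun _ => v)

lemma dg_apply (v : H) (i : Fin m) : dg m v i = v := rfl

lemma diag_mem_diagSubmodule (v : H) : dg m v ∈ diagSubmodule H m :=
  mem_diagSubmodule.2 ⟨v, fun _ => rfl⟩

lemma projL_prodSubmodule (M : Fin m → Submodule ℝ H) [∀ i, CompleteSpace (M i)]
    (x : PiLp 2 fun _ : Fin m => H) :
    projL (prodSubmodule M) x = (WithLp.toLp 2 (fun i => projL (M i) (x i) : ∀ _ : Fin m, H) :
      PiLp 2 fun _ : Fin m => H) := by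
  refine projL_eq_of (mem_prodSubmodule.2 fun i => projL_mem (x i)) fun w hw => ?_
  rw [PiLp.inner_apply]
  refine Finset.sum_eq_zero fun i _ => ?_
  exact projL_inner_sub (x i) (w i) (mem_prodSubmodule.1 hw i)

lemma projL_diagSubmodule (hm : 0 < m) (x : PiLp 2 fun _ : Fin m => H) :
    projL (diagSubmodule H m) x =
      dg m ((m : ℝ)⁻¹ • ∑ i, x i) := by
  have hm' : (m : ℝ) ≠ 0 := Nat.cast_ne_zero.2 hm.ne'
  set a : H := (m : ℝ)⁻¹ • ∑ i, x i with ha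
  refine projL_eq_of (diag_mem_diagSubmodule a) fun w hw => ?_
  obtain ⟨v, hv⟩ := mem_diagSubmodule.1 hw
  rw [PiLp.inner_apply]
  have h1 : ∀ i ∈ Finset.univ,
      ⟪(x - dg m a) i, w i⟫
        = ⟪x i - a, v⟫ := fun i _ => by rw [hv i]; rfl
  rw [Finset.sum_congr rfl h1, ← sum_inner]
  have hsum : (∑ i : Fin m, (x i - a)) = 0 := by
    rw [Finset.sum_sub_distrib, Finset.sum_const, Finset.card_univ, Fintype.card_fin, ha, ← Nat.cast_smul_eq_nsmul ℝ,
      smul_smul, mul_inv_cancel₀ hm', one_smul, sub_self]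
  rw [hsum, inner_zero_left]

def cwL (f : H →L[ℝ] H) : (PiLp 2 fun _ : Fin m => H) →L[ℝ] (PiLp 2 fun _ : Fin m => H) :=
  (((PiLp.continuousLinearEquiv 2 ℝ (fun _ : Fin m => H)).symm :
      (∀ _ : Fin m, H) →L[ℝ] PiLp 2 fun _ : Fin m => H)).comp
    ((ContinuousLinearMap.pi fun i => f.comp (ContinuousLinearMap.proj i)).comp
      ((PiLp.continuousLinearEquiv 2 ℝ (fun _ : Fin m => H)) :
        (PiLp 2 fun _ : Fin m => H) →L[ℝ] ∀ _ : Fin m, H))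

lemma cwL_apply (f : H →L[ℝ] H) (x : PiLp 2 fun _ : Fin m => H) (i : Fin m) :
    cwL f x i = f (x i) := rfl

lemma cwL_comp (f g : H →L[ℝ] H) :
    cwL (m := m) (f.comp g) = (cwL f).comp (cwL g) := rfl

lemma cwL_one : cwL (m := m) (1 : H →L[ℝ] H) = 1 := rfl

lemma cwL_pow (f : H →L[ℝ] H) (n : ℕ) : (cwL (m := m) f) ^ n = cwL (f ^ n) := by
  induction n with
  | zero => simpa using cwL_one.symm
  | succ n ih =>
    rw [pow_succ, pow_succ, ih]
    rfl

lemma cwL_sub (f g : H →L[ℝ] H) : cwL (m := m) (f - g) = cwL f - cwL g := by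
  ext x : 1
  refine PiLp.ext fun i => ?_
  show f (x i) - g (x i) = (cwL f x - cwL g x) i
  rfl


lemma cyclicProd_zero {E : Type} [NormedAddCommGroup E] [NormedSpace ℝ E]
    (P : Fin 0 → (E →L[ℝ] E)) : cyclicProd P = ContinuousLinearMap.id ℝ E := rfl

lemma cyclicProd_succ {E : Type} [NormedAddCommGroup E] [NormedSpace ℝ E] {n : ℕ}
    (P : Fin (n + 1) → (E →L[ℝ] E)) :
    cyclicProd P = (P (Fin.last n)).comp (cyclicProd fun i => P i.castSucc) := by
  unfold cyclicProd
  rw [List.ofFn_succ', List.concat_eq_append, List.foldl_append]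
  rfl

lemma norm_cyclicProd_le_one {E : Type} [NormedAddCommGroup E] [NormedSpace ℝ E] :
    ∀ {n : ℕ} (P : Fin n → (E →L[ℝ] E)), (∀ i, ‖P i‖ ≤ 1) → ‖cyclicProd P‖ ≤ 1
  | 0, P, _ => by rw [cyclicProd_zero]; exact ContinuousLinearMap.norm_id_le
  | (n + 1), P, hP => by
    rw [cyclicProd_succ]
    calc ‖(P (Fin.last n)).comp (cyclicProd fun i => P i.castSucc)‖
        ≤ ‖P (Fin.last n)‖ * ‖cyclicProd fun i => P i.castSucc‖ :=
          ContinuousLinearMap.opNorm_comp_le _ _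
      _ ≤ 1 * 1 := by
          have := norm_cyclicProd_le_one (fun i => P i.castSucc) (fun i => hP _)
          have h2 := hP (Fin.last n)
          exact mul_le_mul h2 this (norm_nonneg _) zero_le_one
      _ = 1 := by ring

lemma cwL_cyclicProd : ∀ {n : ℕ} (Q : Fin n → (H →L[ℝ] H)),
    cyclicProd (fun i => cwL (m := m) (Q i)) = cwL (cyclicProd Q)
  | 0, Q => by rw [cyclicProd_zero, cyclicProd_zero]; rfl
  | (n + 1), Q => by
    rw [cyclicProd_succ, cyclicProd_succ, cwL_cyclicProd (fun i => Q i.castSucc), ← cwL_comp]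

lemma projL_prod_const (N : Submodule ℝ H) [CompleteSpace N] :
    projL (prodSubmodule fun _ : Fin m => N) = cwL (projL N) := by
  ext x : 1
  rw [projL_prodSubmodule (fun _ : Fin m => N) x]
  rfl

def pchain (M : Fin m → Submodule ℝ H) [∀ i, CompleteSpace (M i)] (z : H) : ℕ → H
  | 0 => z
  | (j + 1) => if h : j < m then projL (M ⟨j, h⟩) (pchain M z j) else pchain M z j

lemma pchain_castSucc {n : ℕ} (M : Fin (n + 1) → Submodule ℝ H) [∀ i, CompleteSpace (M i)]
    (z : H) : ∀ j, j ≤ n → pchain M z j = pchain (fun i : Fin n => M i.castSucc) z j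
  | 0, _ => rfl
  | (j + 1), hj => by
    have hj' : j ≤ n := le_of_lt hj
    have h1 : j < n + 1 := by omega
    have h2 : j < n := hj
    show pchain M z (j+1) = pchain (fun i : Fin n => M i.castSucc) z (j+1)
    rw [pchain, pchain, dif_pos h1, dif_pos h2, pchain_castSucc M z j hj']
    rfl

lemma pchain_eq_cyclicProd : ∀ {n : ℕ} (M : Fin n → Submodule ℝ H)
    [∀ i, CompleteSpace (M i)] (z : H),
    pchain M z n = cyclicProd (fun i => projL (M i)) z
  | 0, M, _, z => rfl
  | (n + 1), M, _, z => by
    rw [cyclicProd_succ]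
    show pchain M z (n + 1) = projL (M (Fin.last n)) (cyclicProd (fun i => projL (M i.castSucc)) z)
    rw [pchain, dif_pos (Nat.lt_succ_self n), pchain_castSucc M z n le_rfl,
      pchain_eq_cyclicProd (fun i : Fin n => M i.castSucc) z]
    rfl

section Chain
variable (M : Fin m → Submodule ℝ H) [∀ i, CompleteSpace (M i)] (z : H)

lemma pchain_succ_mem {j : ℕ} (h : j < m) : pchain M z (j + 1) ∈ M ⟨j, h⟩ := by
  rw [pchain, dif_pos h]
  exact projL_mem _

lemma pchain_step_sq {j : ℕ} (h : j < m) :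
    ‖pchain M z j - pchain M z (j + 1)‖ ^ 2 = ‖pchain M z j‖ ^ 2 - ‖pchain M z (j + 1)‖ ^ 2 := by
  have := projL_pythagoras (K := M ⟨j, h⟩) (pchain M z j)
  rw [pchain, dif_pos h]
  linarith

lemma pchain_sum_sq :
    ∑ j ∈ Finset.range m, ‖pchain M z j - pchain M z (j + 1)‖ ^ 2
      = ‖z‖ ^ 2 - ‖pchain M z m‖ ^ 2 := by
  have h1 : ∀ j ∈ Finset.range m, ‖pchain M z j - pchain M z (j + 1)‖ ^ 2
      = ‖pchain M z j‖ ^ 2 - ‖pchain M z (j + 1)‖ ^ 2 :=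
    fun j hj => pchain_step_sq M z (Finset.mem_range.1 hj)
  rw [Finset.sum_congr rfl h1, Finset.sum_range_sub' fun j => ‖pchain M z j‖ ^ 2]
  rfl

lemma norm_pchain_le : ∀ j, ‖pchain M z j‖ ≤ ‖z‖
  | 0 => le_rfl
  | (j + 1) => by
    rw [pchain]
    split
    · exact (norm_projL_apply_le _).trans (norm_pchain_le j)
    · exact norm_pchain_le j

end Chain

lemma sum_min_le : ∀ m : ℕ, 4 * (∑ i ∈ Finset.range m, min (i + 1) (m - 1 - i)) ≤ m ^ 2
  | 0 => by simp
  | 1 => by simp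
  | (m + 2) => by
    have IH := sum_min_le m
    have h1 : (∑ i ∈ Finset.range (m + 2), min (i + 1) (m + 2 - 1 - i))
        = (∑ i ∈ Finset.range m, min (i + 1) (m - 1 - i)) + (m + 1) := by
      rw [Finset.sum_range_succ' _ (m + 1), Finset.sum_range_succ]
      have e1 : ∀ i ∈ Finset.range m,
          min ((i + 1) + 1) (m + 2 - 1 - (i + 1)) = min (i + 1) (m - 1 - i) + 1 := by
        intro i hi
        have := Finset.mem_range.1 hi
        omega
      rw [Finset.sum_congr rfl e1, Finset.sum_add_distrib, Finset.sum_const,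
        Finset.card_range, smul_eq_mul, mul_one]
      omega
    have h2 : (m + 2) ^ 2 = m ^ 2 + 4 * m + 4 := by ring
    omega

set_option maxHeartbeats 1600000 in
lemma key_ineq (M : Fin m → Submodule ℝ H) [∀ i, CompleteSpace (M i)] (z : H) :
    ∑ i : Fin m, ‖(cyclicProd fun i => projL (M i)) z
        - projL (M i) ((cyclicProd fun i => projL (M i)) z)‖ ^ 2
      ≤ (m : ℝ) ^ 2 / 4 * (2 * ‖z‖ * ‖(cyclicProd fun i => projL (M i)) z - z‖) := by
  set S := cyclicProd fun i => projL (M i) with hSdef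
  set y := S z with hy
  have hum : pchain M z m = y := pchain_eq_cyclicProd M z
  have hum' : pchain M y m = S y := pchain_eq_cyclicProd M y
  set Sa := ∑ j ∈ Finset.range m, dist (pchain M z j) (pchain M z (j + 1)) ^ 2 with hSa
  set Sa' := ∑ j ∈ Finset.range m, dist (pchain M y j) (pchain M y (j + 1)) ^ 2 with hSa'
  have hSa0 : 0 ≤ Sa := Finset.sum_nonneg fun j _ => sq_nonneg _
  set X := max Sa Sa' with hX
  have hX0 : 0 ≤ X := hSa0.trans (le_max_left _ _)
  have hyz : ‖y‖ ≤ ‖z‖ := by rw [← hum]; exact norm_pchain_le M z m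
  have hSyy : ‖S y - y‖ ≤ ‖y - z‖ := by
    have h1 : S y - y = S (y - z) := by rw [map_sub, ← hy]
    rw [h1]
    have h2 : ‖S (y - z)‖ ≤ ‖S‖ * ‖y - z‖ := S.le_opNorm _
    have h3 : ‖S‖ ≤ 1 := norm_cyclicProd_le_one _ fun i => norm_projL_le
    nlinarith [norm_nonneg (y - z)]
  have hSale : Sa ≤ 2 * ‖z‖ * ‖y - z‖ := by
    have e : Sa = ‖z‖ ^ 2 - ‖y‖ ^ 2 := by
      rw [hSa]
      simp only [dist_eq_norm]
      rw [pchain_sum_sq, hum]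
    have h4 : ‖z‖ - ‖y‖ ≤ ‖y - z‖ := by
      have := norm_sub_norm_le z y
      rw [norm_sub_rev] at this
      linarith
    nlinarith [norm_nonneg z, norm_nonneg y]
  have hSa'le : Sa' ≤ 2 * ‖z‖ * ‖y - z‖ := by
    have e : Sa' = ‖y‖ ^ 2 - ‖S y‖ ^ 2 := by
      rw [hSa']
      simp only [dist_eq_norm]
      rw [pchain_sum_sq, hum']
    have h4 : ‖y‖ - ‖S y‖ ≤ ‖S y - y‖ := by
      have := norm_sub_norm_le y (S y)
      rw [norm_sub_rev] at this
      linarith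
    have h5 : ‖S y‖ ≤ ‖y‖ := by rw [← hum']; exact norm_pchain_le M y m
    nlinarith [norm_nonneg z, norm_nonneg y]
  have hXle : X ≤ 2 * ‖z‖ * ‖y - z‖ := max_le hSale hSa'le
  have hper : ∀ i : Fin m, ‖y - projL (M i) y‖ ^ 2
      ≤ ((min ((i : ℕ) + 1) (m - 1 - (i : ℕ)) : ℕ) : ℝ) * X := by
    intro i
    have hiA : ‖y - projL (M i) y‖ ^ 2 ≤ ((m - 1 - (i : ℕ) : ℕ) : ℝ) * Sa := by
      have hmem : pchain M z ((i : ℕ) + 1) ∈ M i := by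
        have := pchain_succ_mem M z i.isLt
        simpa using this
      have h1 : ‖y - projL (M i) y‖ ≤ ‖y - pchain M z ((i : ℕ) + 1)‖ := norm_sub_projL_le hmem
      have h2 : ‖y - pchain M z ((i : ℕ) + 1)‖ = dist (pchain M z ((i : ℕ) + 1)) (pchain M z m) := by
        rw [dist_eq_norm, norm_sub_rev, hum]
      have h3 : dist (pchain M z ((i : ℕ) + 1)) (pchain M z m)
          ≤ ∑ j ∈ Finset.Ico ((i : ℕ) + 1) m, dist (pchain M z j) (pchain M z (j + 1)) :=
        dist_le_Ico_sum_dist _ i.isLt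
      have h4 : (∑ j ∈ Finset.Ico ((i : ℕ) + 1) m, dist (pchain M z j) (pchain M z (j + 1))) ^ 2
          ≤ ((Finset.Ico ((i : ℕ) + 1) m).card : ℝ)
            * ∑ j ∈ Finset.Ico ((i : ℕ) + 1) m, dist (pchain M z j) (pchain M z (j + 1)) ^ 2 :=
        sq_sum_le_card_mul_sum_sq
      have h5 : ∑ j ∈ Finset.Ico ((i : ℕ) + 1) m, dist (pchain M z j) (pchain M z (j + 1)) ^ 2
          ≤ Sa := by
        rw [hSa]
        refine Finset.sum_le_sum_of_subset_of_nonneg ?_ fun j _ _ => sq_nonneg _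
        intro j hj
        rw [Finset.mem_range]
        exact (Finset.mem_Ico.1 hj).2
      have hcard : ((Finset.Ico ((i : ℕ) + 1) m).card : ℝ) = ((m - 1 - (i : ℕ) : ℕ) : ℝ) := by
        rw [Nat.card_Ico]
        congr 1
        omega
      have hd0 : (0 : ℝ) ≤ dist (pchain M z ((i : ℕ) + 1)) (pchain M z m) := dist_nonneg
      calc ‖y - projL (M i) y‖ ^ 2 ≤ ‖y - pchain M z ((i : ℕ) + 1)‖ ^ 2 :=
            pow_le_pow_left₀ (norm_nonneg _) h1 2
        _ = dist (pchain M z ((i : ℕ) + 1)) (pchain M z m) ^ 2 := by rw [h2]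
        _ ≤ (∑ j ∈ Finset.Ico ((i : ℕ) + 1) m, dist (pchain M z j) (pchain M z (j + 1))) ^ 2 :=
            pow_le_pow_left₀ hd0 h3 2
        _ ≤ ((Finset.Ico ((i : ℕ) + 1) m).card : ℝ)
            * ∑ j ∈ Finset.Ico ((i : ℕ) + 1) m, dist (pchain M z j) (pchain M z (j + 1)) ^ 2 := h4
        _ ≤ ((m - 1 - (i : ℕ) : ℕ) : ℝ) * Sa := by
            rw [hcard]
            exact mul_le_mul_of_nonneg_left h5 (Nat.cast_nonneg _)
    have hiB : ‖y - projL (M i) y‖ ^ 2 ≤ (((i : ℕ) + 1 : ℕ) : ℝ) * Sa' := by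
      have hmem : pchain M y ((i : ℕ) + 1) ∈ M i := by
        have := pchain_succ_mem M y i.isLt
        simpa using this
      have h1 : ‖y - projL (M i) y‖ ≤ ‖y - pchain M y ((i : ℕ) + 1)‖ := norm_sub_projL_le hmem
      have h2 : ‖y - pchain M y ((i : ℕ) + 1)‖ = dist (pchain M y 0) (pchain M y ((i : ℕ) + 1)) := by
        rw [dist_eq_norm]
        rfl
      have h3 : dist (pchain M y 0) (pchain M y ((i : ℕ) + 1))
          ≤ ∑ j ∈ Finset.Ico 0 ((i : ℕ) + 1), dist (pchain M y j) (pchain M y (j + 1)) :=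
        dist_le_Ico_sum_dist _ (Nat.zero_le _)
      have h4 : (∑ j ∈ Finset.Ico 0 ((i : ℕ) + 1), dist (pchain M y j) (pchain M y (j + 1))) ^ 2
          ≤ ((Finset.Ico 0 ((i : ℕ) + 1)).card : ℝ)
            * ∑ j ∈ Finset.Ico 0 ((i : ℕ) + 1), dist (pchain M y j) (pchain M y (j + 1)) ^ 2 :=
        sq_sum_le_card_mul_sum_sq
      have h5 : ∑ j ∈ Finset.Ico 0 ((i : ℕ) + 1), dist (pchain M y j) (pchain M y (j + 1)) ^ 2
          ≤ Sa' := by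
        rw [hSa']
        refine Finset.sum_le_sum_of_subset_of_nonneg ?_ fun j _ _ => sq_nonneg _
        intro j hj
        rw [Finset.mem_range]
        have := (Finset.mem_Ico.1 hj).2
        have := i.isLt
        omega
      have hcard : ((Finset.Ico 0 ((i : ℕ) + 1)).card : ℝ) = (((i : ℕ) + 1 : ℕ) : ℝ) := by
        rw [Nat.card_Ico]
        norm_num
      have hd0 : (0 : ℝ) ≤ dist (pchain M y 0) (pchain M y ((i : ℕ) + 1)) := dist_nonneg
      calc ‖y - projL (M i) y‖ ^ 2 ≤ ‖y - pchain M y ((i : ℕ) + 1)‖ ^ 2 :=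
            pow_le_pow_left₀ (norm_nonneg _) h1 2
        _ = dist (pchain M y 0) (pchain M y ((i : ℕ) + 1)) ^ 2 := by rw [h2]
        _ ≤ (∑ j ∈ Finset.Ico 0 ((i : ℕ) + 1), dist (pchain M y j) (pchain M y (j + 1))) ^ 2 :=
            pow_le_pow_left₀ hd0 h3 2
        _ ≤ ((Finset.Ico 0 ((i : ℕ) + 1)).card : ℝ)
            * ∑ j ∈ Finset.Ico 0 ((i : ℕ) + 1), dist (pchain M y j) (pchain M y (j + 1)) ^ 2 := h4
        _ ≤ (((i : ℕ) + 1 : ℕ) : ℝ) * Sa' := by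
            rw [hcard]
            exact mul_le_mul_of_nonneg_left h5 (Nat.cast_nonneg _)
    rcases le_total ((i : ℕ) + 1) (m - 1 - (i : ℕ)) with hc | hc
    · rw [min_eq_left hc]
      exact hiB.trans (mul_le_mul_of_nonneg_left (le_max_right _ _) (Nat.cast_nonneg _))
    · rw [min_eq_right hc]
      exact hiA.trans (mul_le_mul_of_nonneg_left (le_max_left _ _) (Nat.cast_nonneg _))
  calc ∑ i : Fin m, ‖y - projL (M i) y‖ ^ 2
      ≤ ∑ i : Fin m, ((min ((i : ℕ) + 1) (m - 1 - (i : ℕ)) : ℕ) : ℝ) * X :=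
        Finset.sum_le_sum fun i _ => hper i
    _ = (((∑ j ∈ Finset.range m, min (j + 1) (m - 1 - j)) : ℕ) : ℝ) * X := by
        rw [← Finset.sum_mul]
        congr 1
        rw [Nat.cast_sum]
        exact Fin.sum_univ_eq_sum_range (fun j => ((min (j + 1) (m - 1 - j) : ℕ) : ℝ)) m
    _ ≤ (m : ℝ) ^ 2 / 4 * X := by
        refine mul_le_mul_of_nonneg_right ?_ hX0
        have := sum_min_le m
        have h6 : (4 : ℝ) * ((∑ j ∈ Finset.range m, min (j + 1) (m - 1 - j) : ℕ) : ℝ)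
            ≤ ((m : ℝ)) ^ 2 := by exact_mod_cast this
        linarith
    _ ≤ (m : ℝ) ^ 2 / 4 * (2 * ‖z‖ * ‖y - z‖) := by
        refine mul_le_mul_of_nonneg_left hXle (by positivity)

lemma norm_dg (v : H) : ‖dg m v‖ = Real.sqrt m * ‖v‖ := by
  have h : ‖dg m v‖ ^ 2 = (m : ℝ) * ‖v‖ ^ 2 := by
    rw [PiLp.norm_sq_eq_of_L2]
    simp [dg_apply]
  calc ‖dg m v‖ = Real.sqrt (‖dg m v‖ ^ 2) := (Real.sqrt_sq (norm_nonneg _)).symm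
    _ = Real.sqrt ((m : ℝ) * ‖v‖ ^ 2) := by rw [h]
    _ = Real.sqrt m * ‖v‖ := by
        rw [Real.sqrt_mul (Nat.cast_nonneg m), Real.sqrt_sq (norm_nonneg v)]


set_option maxHeartbeats 1600000 in
/-- With `𝐓 = P_{M_m^m} ⋯ P_{M_1^m}` on `H^m`, `P_D` the projection onto the
diagonal and `P_{C^⊥}` the projection onto `(M₁ × ⋯ × Mₘ)ᗮ`, for every `k ≥ 1`:
`‖P_{C^⊥} 𝐓^k P_D‖ ≤ √((m/2)·‖(𝐓^k − 𝐓^{k−1}) P_D‖)`. -/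
theorem norm_projC_perp_pow_diag_le_sqrt {m : ℕ} (M : Fin m → Submodule ℝ H)
    [∀ i, CompleteSpace (M i)] (k : ℕ) (hk : 1 ≤ k) :
    ‖(projL ((prodSubmodule M)ᗮ)).comp
        (((cyclicProd fun i : Fin m => projL (prodSubmodule fun _ : Fin m => M i)) ^ k).comp
          (projL (diagSubmodule H m)))‖ ≤
      Real.sqrt ((m / 2) *
        ‖((cyclicProd fun i : Fin m => projL (prodSubmodule fun _ : Fin m => M i)) ^ k -
            (cyclicProd fun i : Fin m => projL (prodSubmodule fun _ : Fin m => M i)) ^ (k - 1)).comp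
          (projL (diagSubmodule H m))‖) := by
  rcases Nat.eq_zero_or_pos m with hm0 | hm
  · subst hm0
    haveI : Subsingleton (PiLp 2 fun _ : Fin 0 => H) :=
      ⟨fun a b => PiLp.ext fun i => i.elim0⟩
    have hz : (projL ((prodSubmodule M)ᗮ)).comp
        (((cyclicProd fun i : Fin 0 => projL (prodSubmodule fun _ : Fin 0 => M i)) ^ k).comp
          (projL (diagSubmodule H 0))) = 0 := by
      refine ContinuousLinearMap.ext fun x => ?_
      exact Subsingleton.elim _ _
    rw [hz, norm_zero]
    exact Real.sqrt_nonneg _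
  · obtain ⟨k', rfl⟩ : ∃ k', k = k' + 1 := ⟨k - 1, by omega⟩
    set S := cyclicProd fun i : Fin m => projL (M i) with hSdef
    have hT : (cyclicProd fun i : Fin m => projL (prodSubmodule fun _ : Fin m => M i))
        = cwL S := by
      have h1 : (fun i : Fin m => projL (prodSubmodule fun _ : Fin m => M i))
          = fun i : Fin m => cwL (projL (M i)) := funext fun i => projL_prod_const (M i)
      rw [h1, cwL_cyclicProd]
    rw [hT, Nat.add_sub_cancel]
    set B := ((cwL (m := m) S) ^ (k' + 1) - (cwL S) ^ k').comp (projL (diagSubmodule H m))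
      with hB
    refine ContinuousLinearMap.opNorm_le_bound _ (Real.sqrt_nonneg _) fun x => ?_
    set w := (m : ℝ)⁻¹ • ∑ i, x i with hw
    have hPD : projL (diagSubmodule H m) x = dg m w := projL_diagSubmodule hm x
    have hS1 : ∀ v : H, ‖S v‖ ≤ ‖v‖ := by
      intro v
      have h2 : ‖S v‖ ≤ ‖S‖ * ‖v‖ := S.le_opNorm _
      have h3 : ‖S‖ ≤ 1 := norm_cyclicProd_le_one _ fun i => norm_projL_le
      nlinarith [norm_nonneg v]
    have hSn : ∀ (n : ℕ) (v : H), ‖(S ^ n) v‖ ≤ ‖v‖ := by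
      intro n
      induction n with
      | zero => intro v; simp
      | succ n ih =>
        intro v
        rw [pow_succ']
        exact (hS1 _).trans (ih v)
    set z := (S ^ k') w with hz
    set y := S z with hy
    have hyk : (S ^ (k' + 1)) w = y := by rw [pow_succ']; rfl
    have hTkPD : ((cwL (m := m) S) ^ (k' + 1)) (dg m w) = dg m y := by
      rw [cwL_pow]
      have : cwL (S ^ (k' + 1)) (dg m w) = dg m ((S ^ (k' + 1)) w) := rfl
      rw [this, hyk]
    have hAx : (projL ((prodSubmodule M)ᗮ)).comp
        ((((cwL (m := m) S) ^ (k' + 1))).comp (projL (diagSubmodule H m))) x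
        = dg m y - projL (prodSubmodule M) (dg m y) := by
      rw [ContinuousLinearMap.comp_apply, ContinuousLinearMap.comp_apply, hPD, hTkPD,
        projL_orthogonal]
    have hAx2 : ‖dg m y - projL (prodSubmodule M) (dg m y)‖ ^ 2
        = ∑ i : Fin m, ‖y - projL (M i) y‖ ^ 2 := by
      rw [PiLp.norm_sq_eq_of_L2]
      refine Finset.sum_congr rfl fun i _ => ?_
      congr 1
      rw [projL_prodSubmodule]
      rfl
    have hBx : B x = dg m (y - z) := by
      rw [hB, ContinuousLinearMap.comp_apply, ContinuousLinearMap.sub_apply, hPD, hTkPD, cwL_pow]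
      have : cwL (S ^ k') (dg m w) = dg m ((S ^ k') w) := rfl
      rw [this, ← hz]
      rfl
    have hBxn : Real.sqrt m * ‖y - z‖ ≤ ‖B‖ * ‖x‖ := by
      rw [← norm_dg, ← hBx]
      exact B.le_opNorm x
    have hwn : Real.sqrt m * ‖w‖ ≤ ‖x‖ := by
      rw [← norm_dg, ← hPD]
      exact norm_projL_apply_le x
    have hzw : ‖z‖ ≤ ‖w‖ := hSn k' w
    have hkey := key_ineq M z
    rw [← hSdef, ← hy] at hkey
    have hsm : Real.sqrt m * Real.sqrt m = (m : ℝ) := Real.mul_self_sqrt (Nat.cast_nonneg m)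
    have hm1 : (1 : ℝ) ≤ (m : ℝ) := by exact_mod_cast hm
    have hsq0 : (0 : ℝ) ≤ Real.sqrt m := Real.sqrt_nonneg _
    have e1 : Real.sqrt m * ‖z‖ ≤ ‖x‖ :=
      le_trans (mul_le_mul_of_nonneg_left hzw hsq0) hwn
    have e3 : (Real.sqrt m * ‖z‖) * (Real.sqrt m * ‖y - z‖) ≤ ‖x‖ * (‖B‖ * ‖x‖) :=
      mul_le_mul e1 hBxn (by positivity) (norm_nonneg x)
    have hfin : ‖dg m y - projL (prodSubmodule M) (dg m y)‖ ^ 2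
        ≤ ((m : ℝ) / 2 * ‖B‖) * ‖x‖ ^ 2 := by
      rw [hAx2]
      refine hkey.trans ?_
      nlinarith [norm_nonneg z, norm_nonneg (y - z), norm_nonneg x, norm_nonneg B]
    calc ‖(projL ((prodSubmodule M)ᗮ)).comp
          ((((cwL (m := m) S) ^ (k' + 1))).comp (projL (diagSubmodule H m))) x‖
        = ‖dg m y - projL (prodSubmodule M) (dg m y)‖ := by rw [hAx]
      _ = Real.sqrt (‖dg m y - projL (prodSubmodule M) (dg m y)‖ ^ 2) :=
          (Real.sqrt_sq (norm_nonneg _)).symm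
      _ ≤ Real.sqrt (((m : ℝ) / 2 * ‖B‖) * ‖x‖ ^ 2) := Real.sqrt_le_sqrt hfin
      _ = Real.sqrt ((m : ℝ) / 2 * ‖B‖) * ‖x‖ := by
          rw [Real.sqrt_mul (by positivity), Real.sqrt_sq (norm_nonneg x)]
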